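/- The set U_1 of points in [0, 1/(q_2−1)] with a unique q_2-expansion equals { (0^∞)_{q_2}, (1^∞)_{q_2} } ∪ ⋃_{k≥0} { (0^k(10)^∞)_{q_2}, (1^k(01)^∞)_{q_2} }. -/

import Mathlib

open Set

/-- The value `∑ dᵢ / qⁱ` (i ≥ 1) of a digit sequence `d` in base `q`
(here `d i` is the digit `d_{i+1}` of the paper). -/
noncomputable def expVal (q : ℝ) (d : ℕ → ℕ) : ℝ := ∑' i : ℕ, (d i : ℝ) / q ^ (i + 1)

/-- The set of `q`-expansions of `x`: 0-1 digit sequences whose value in base `q` is `x`. -/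
def expansions (q x : ℝ) : Set (ℕ → ℕ) := {d | (∀ i, d i ≤ 1) ∧ expVal q d = x}

/-- The map `T_{q,s}(x) = qx - s`. -/
def Tmap (q : ℝ) (s : ℕ) (x : ℝ) : ℝ := q * x - s

/-- `T_{q,d₁⋯dₙ} = T_{q,d₁} ∘ ⋯ ∘ T_{q,dₙ}` (the identity for the empty word). -/
def Tword (q : ℝ) (w : List ℕ) (x : ℝ) : ℝ := w.foldr (fun s y => Tmap q s y) x

/-- The switch region `S_q = [1/q, 1/(q²-q)]`. -/
def switchRegion (q : ℝ) : Set ℝ := Set.Icc (1 / q) (1 / (q ^ 2 - q))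

/-- `A₁(q)`: points of the switch region for which both `T_{q,0}(x)` and `T_{q,1}(x)`
have finitely many `q`-expansions. -/
def A1set (q : ℝ) : Set ℝ :=
  {x ∈ switchRegion q | (expansions q (Tmap q 0 x)).Finite ∧ (expansions q (Tmap q 1 x)).Finite}

/-- `A₂(q)`: points of the switch region for which exactly one of `T_{q,0}(x)`, `T_{q,1}(x)`
has finitely many `q`-expansions. -/
def A2set (q : ℝ) : Set ℝ :=
  {x ∈ switchRegion q | Xor' (expansions q (Tmap q 0 x)).Finite (expansions q (Tmap q 1 x)).Finite}

/-- `A₃(q)`: points of the switch region for which both `T_{q,0}(x)` and `T_{q,1}(x)`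
have infinitely many `q`-expansions. -/
def A3set (q : ℝ) : Set ℝ :=
  {x ∈ switchRegion q | (expansions q (Tmap q 0 x)).Infinite ∧ (expansions q (Tmap q 1 x)).Infinite}

/-- `x` is a `q`-null infinite point: it has infinitely many `q`-expansions and every
branching point of `x` (an image `T_{q,d₁⋯dₙ}(x)` lying in `A₂(q) ∪ A₃(q)`) lies in `A₂(q)`. -/
def IsNullInfinite (q x : ℝ) : Prop :=
  (expansions q x).Infinite ∧
    ∀ w : List ℕ, (∀ s ∈ w, s ≤ 1) →
      Tword q w x ∈ A2set q ∪ A3set q → Tword q w x ∈ A2set q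

/-- The interval `J_q = [(q+q²)/(q⁴-1), (1+q³)/(q⁴-1)]`. -/
def Jset (q : ℝ) : Set ℝ := Set.Icc ((q + q ^ 2) / (q ^ 4 - 1)) ((1 + q ^ 3) / (q ^ 4 - 1))

/-- `B_m` (for a finite `m`): the set of `q ∈ (1,2)` such that some `x ∈ [0, 1/(q-1)]`
has exactly `m` different `q`-expansions. -/
def Bset (m : ℕ) : Set ℝ :=
  {q | q ∈ Set.Ioo (1 : ℝ) 2 ∧
    ∃ x ∈ Set.Icc (0 : ℝ) (1 / (q - 1)), Cardinal.mk ↥(expansions q x) = (m : Cardinal)}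

/-- `B_{ℵ₀}`: the set of `q ∈ (1,2)` such that some `x ∈ [0, 1/(q-1)]` has exactly
countably infinitely many different `q`-expansions. -/
def BalephSet : Set ℝ :=
  {q | q ∈ Set.Ioo (1 : ℝ) 2 ∧
    ∃ x ∈ Set.Icc (0 : ℝ) (1 / (q - 1)), Cardinal.mk ↥(expansions q x) = Cardinal.aleph0}

/-- `U_k`: the set of `x ∈ [0, 1/(q-1)]` having exactly `k` different `q`-expansions. -/
def Uset (q : ℝ) (k : ℕ) : Set ℝ :=
  {x ∈ Set.Icc (0 : ℝ) (1 / (q - 1)) | Cardinal.mk ↥(expansions q x) = (k : Cardinal)}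

/-- `ε_k = (01)^k (10)^∞`; in particular `eps 0 = (10)^∞`. -/
def eps (k : ℕ) : ℕ → ℕ := fun i => if i < 2 * k then i % 2 else (i - 2 * k + 1) % 2

/-- Prepend the digit `s`, repeated `m` times, to the digit sequence `d`. -/
def prep (s m : ℕ) (d : ℕ → ℕ) : ℕ → ℕ := fun i => if i < m then s else d (i - m)

/-- Reflection of a digit sequence: each digit `d` is replaced by `1 - d`. -/
def reflSeq (d : ℕ → ℕ) : ℕ → ℕ := fun i => 1 - d i

/-- Concatenation of a finite word with an infinite digit sequence. -/
def seqCat (w : List ℕ) (t : ℕ → ℕ) : ℕ → ℕ :=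
  fun i => if i < w.length then w.getD i 0 else t (i - w.length)

/-- The sets `E_m` of the paper: for odd `m` (`m = 1, 3`),
`E_m = ⋃_{k≥1} {(01^{m+1}ε_k)_q, (10^m ε_k)_q} \ {(10ε₁)_q}`; for even `m` (`m = 2, 4`),
`E_m = {(01^m(10)^∞)_q} ∪ ⋃_{k≥1} {(01^{m+1}ε_k)_q, (10^m ε_k)_q}`. -/
noncomputable def Eset (q : ℝ) (m : ℕ) : Set ℝ :=
  if m % 2 = 1 then
    (⋃ k : ℕ, {expVal q (prep 0 1 (prep 1 (m + 1) (eps (k + 1)))),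
               expVal q (prep 1 1 (prep 0 m (eps (k + 1))))}) \
      {expVal q (prep 1 1 (prep 0 1 (eps 1)))}
  else
    {expVal q (prep 0 1 (prep 1 m (eps 0)))} ∪
      ⋃ k : ℕ, {expVal q (prep 0 1 (prep 1 (m + 1) (eps (k + 1)))),
                expVal q (prep 1 1 (prep 0 m (eps (k + 1))))}

/-!
A `0`-`1` sequence is the unique `q`-expansion of its value iff none of its tails has its value in
the switch region `[1/q, 1/(q²-q)]`: two different expansions have equal tails at their first
difference, one starting with `0` and one with `1`, and such a tail lies in the switch region;
conversely, from a tail in the switch region the greedy algorithm continues the expansion with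
either digit.

For `q₂` one has `q₂ + 1 < q₂²` and `q₂(q₂-1)² ≤ 1`. The second inequality rules out the blocks
`011` and `100` in a sequence avoiding the switch region (the reflection `d ↦ 1 - d` preserves the
switch region and turns `100` into `011`), so once its digits change they alternate. The first
inequality shows that the tails of `0^k(10)^∞`, which are again of this form, avoid the switch
region, and so do those of their reflections `1^k(01)^∞`.
-/

section
variable {q : ℝ} {d e : ℕ → ℕ}

lemma summable_digit_div_pow (hq : 1 < q) (hd : ∀ i, d i ≤ 1) :
    Summable (fun i => (d i : ℝ) / q ^ (i + 1)) := by
  refine Summable.of_nonneg_of_le (fun i => by positivity) (fun i => ?_)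
    ((summable_geometric_of_lt_one (by positivity) (inv_lt_one_of_one_lt₀ hq)).mul_left q⁻¹)
  rw [div_eq_mul_inv, ← inv_pow, pow_succ']
  exact mul_le_of_le_one_left (by positivity) (by exact_mod_cast hd i)

lemma expVal_eq_head_add_tail (hq : 1 < q) (hd : ∀ i, d i ≤ 1) :
    expVal q d = (d 0 + expVal q (fun i => d (i + 1))) / q := by
  unfold expVal
  rw [(summable_digit_div_pow hq hd).tsum_eq_zero_add, add_div, ← tsum_div_const]
  simp only [pow_succ, zero_add, pow_zero, one_mul, div_div]

lemma expVal_tail_eq (hq : 1 < q) (hd : ∀ i, d i ≤ 1) (n : ℕ) :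
    expVal q (fun i => d (i + n)) = (d n + expVal q (fun i => d (i + (n + 1)))) / q := by
  have h := expVal_eq_head_add_tail hq (d := fun i => d (i + n)) fun i => hd _
  simp only [zero_add, Nat.add_right_comm _ 1 n] at h
  exact h

lemma expVal_nonneg (hq : 0 ≤ q) (d : ℕ → ℕ) : 0 ≤ expVal q d :=
  tsum_nonneg fun _ => by positivity

lemma expVal_mono (hq : 1 < q) (he : ∀ i, e i ≤ 1) (hde : ∀ i, d i ≤ e i) :
    expVal q d ≤ expVal q e :=
  (summable_digit_div_pow hq fun i => (hde i).trans (he i)).tsum_le_tsum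
    (fun i => by gcongr; exact_mod_cast hde i) (summable_digit_div_pow hq he)

lemma expVal_const_zero : expVal q (fun _ => 0) = 0 := by
  simp [expVal]

lemma expVal_const_one (hq : 1 < q) : expVal q (fun _ => 1) = 1 / (q - 1) := by
  have h := expVal_eq_head_add_tail hq (d := fun _ => 1) fun _ => le_rfl
  rw [eq_div_iff (by linarith)] at h
  rw [eq_div_iff (by linarith)]
  push_cast at h
  linarith

lemma expVal_le (hq : 1 < q) (hd : ∀ i, d i ≤ 1) : expVal q d ≤ 1 / (q - 1) :=
  expVal_const_one hq ▸ expVal_mono hq (fun _ => le_rfl) hd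

lemma expVal_mem_Icc (hq : 1 < q) (hd : ∀ i, d i ≤ 1) : expVal q d ∈ Icc 0 (1 / (q - 1)) :=
  ⟨expVal_nonneg (by linarith) d, expVal_le hq hd⟩

lemma expVal_reflSeq (hq : 1 < q) (hd : ∀ i, d i ≤ 1) :
    expVal q (reflSeq d) = 1 / (q - 1) - expVal q d := by
  rw [← expVal_const_one hq, eq_sub_iff_add_eq]
  unfold expVal
  rw [← (summable_digit_div_pow hq (d := reflSeq d) fun i => Nat.sub_le 1 (d i)).tsum_add
    (summable_digit_div_pow hq hd)]
  refine tsum_congr fun i => ?_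
  rw [← add_div, reflSeq, Nat.cast_sub (hd i)]
  push_cast
  ring

lemma one_div_le_expVal_of_head_eq_one (hq : 1 < q) (hd : ∀ i, d i ≤ 1) (h0 : d 0 = 1) :
    1 / q ≤ expVal q d := by
  rw [expVal_eq_head_add_tail hq hd, h0, Nat.cast_one]
  gcongr
  linarith [expVal_nonneg (by linarith) fun i => d (i + 1)]

lemma expVal_le_of_head_eq_zero (hq : 1 < q) (hd : ∀ i, d i ≤ 1) (h0 : d 0 = 0) :
    expVal q d ≤ 1 / (q ^ 2 - q) := by
  rw [expVal_eq_head_add_tail hq hd, h0, Nat.cast_zero, zero_add,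
    show q ^ 2 - q = (q - 1) * q by ring, ← div_div]
  gcongr
  exact expVal_le hq fun i => hd _

lemma expVal_eq_iff_expVal_tail_eq (hq : 1 < q) (hd : ∀ i, d i ≤ 1) (he : ∀ i, e i ≤ 1) {n : ℕ}
    (hde : ∀ i < n, d i = e i) :
    expVal q d = expVal q e ↔
      expVal q (fun i => d (i + n)) = expVal q (fun i => e (i + n)) := by
  induction n generalizing d e with
  | zero => simp
  | succ n ih =>
    rw [expVal_eq_head_add_tail hq hd, expVal_eq_head_add_tail hq he, hde 0 (by omega),
      div_left_inj' (by positivity), add_right_inj]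
    exact ih (fun i => hd _) (fun i => he _) fun i hi => hde (i + 1) (by omega)

noncomputable def greedyDigit (q y : ℝ) : ℕ := if 1 ≤ q * y then 1 else 0

noncomputable def greedyMap (q y : ℝ) : ℝ := Tmap q (greedyDigit q y) y

noncomputable def greedyExpansion (q y : ℝ) (n : ℕ) : ℕ := greedyDigit q ((greedyMap q)^[n] y)

lemma greedyExpansion_le_one (q y : ℝ) (n : ℕ) : greedyExpansion q y n ≤ 1 := by
  unfold greedyExpansion greedyDigit
  split <;> omega

lemma greedyExpansion_zero (q y : ℝ) : greedyExpansion q y 0 = greedyDigit q y := rfl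

lemma greedyExpansion_succ (q y : ℝ) :
    (fun i => greedyExpansion q y (i + 1)) = greedyExpansion q (greedyMap q y) := by
  funext i
  simp only [greedyExpansion, Function.iterate_succ_apply]

lemma greedyMap_mem_Icc (hq : 1 < q) (hq2 : q ≤ 2) {y : ℝ} (hy : y ∈ Icc 0 (1 / (q - 1))) :
    greedyMap q y ∈ Icc 0 (1 / (q - 1)) := by
  have hM : 1 / (q - 1) * (q - 1) = 1 := one_div_mul_cancel (by linarith)
  have hM1 : 1 ≤ 1 / (q - 1) := by rw [le_div_iff₀ (by linarith)]; linarith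
  obtain ⟨hy0, hy1⟩ := hy
  unfold greedyMap greedyDigit Tmap
  split_ifs with h <;> push_cast <;> constructor <;> nlinarith

/-- The error `y - expVal q (greedyExpansion q y)` lies in `[-1/(q-1), 1/(q-1)]` and is divided
by `q` when `y` is replaced by `greedyMap q y`. -/
lemma expVal_greedyExpansion (hq : 1 < q) (hq2 : q ≤ 2) {y : ℝ}
    (hy : y ∈ Icc 0 (1 / (q - 1))) : expVal q (greedyExpansion q y) = y := by
  have hbound : ∀ n, ∀ y ∈ Icc 0 (1 / (q - 1)),
      |y - expVal q (greedyExpansion q y)| ≤ 1 / (q - 1) / q ^ n := by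
    intro n
    induction n with
    | zero =>
      intro y hy
      have := expVal_mem_Icc hq (greedyExpansion_le_one q y)
      rw [pow_zero, div_one, abs_sub_le_iff]
      constructor <;> linarith [hy.1, hy.2, this.1, this.2]
    | succ n ih =>
      intro y hy
      have hrec : y - expVal q (greedyExpansion q y) =
          (greedyMap q y - expVal q (greedyExpansion q (greedyMap q y))) / q := by
        rw [expVal_eq_head_add_tail hq (greedyExpansion_le_one q y), greedyExpansion_succ,
          greedyMap, Tmap, greedyExpansion_zero]
        field_simp
        ring
      rw [hrec, abs_div, abs_of_pos (by linarith : 0 < q), pow_succ, ← div_div]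
      gcongr
      exact ih _ (greedyMap_mem_Icc hq hq2 hy)
  by_contra hne
  have hpos : 0 < |y - expVal q (greedyExpansion q y)| :=
    abs_pos.mpr (sub_ne_zero.mpr (Ne.symm hne))
  obtain ⟨n, hn⟩ := pow_unbounded_of_one_lt (1 / (q - 1) / |y - expVal q (greedyExpansion q y)|) hq
  have := hbound n y hy
  rw [div_lt_iff₀ hpos] at hn
  rw [le_div_iff₀ (by positivity)] at this
  linarith

lemma one_div_sub_one_eq_add (hq : 1 < q) : 1 / (q - 1) = 1 / q + 1 / (q ^ 2 - q) := by
  have hq2 : 0 < q ^ 2 - q := by nlinarith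
  rw [div_add_div _ _ (by positivity) hq2.ne', div_eq_div_iff (by linarith) (by positivity)]
  ring

lemma exists_tail_mem_switchRegion (hq : 1 < q) (hd : ∀ i, d i ≤ 1) (he : ∀ i, e i ≤ 1)
    (hde : expVal q d = expVal q e) (hne : d ≠ e) :
    ∃ n, expVal q (fun i => d (i + n)) ∈ switchRegion q := by
  have hex : ∃ n, d n ≠ e n := Function.ne_iff.mp hne
  obtain ⟨n, hn, hmin⟩ : ∃ n, d n ≠ e n ∧ ∀ i < n, d i = e i :=
    ⟨Nat.find hex, Nat.find_spec hex, fun i hi => not_not.mp (Nat.find_min hex hi)⟩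
  have htail := (expVal_eq_iff_expVal_tail_eq hq hd he hmin).mp hde
  refine ⟨n, ?_⟩
  rcases Nat.le_one_iff_eq_zero_or_eq_one.mp (hd n) with h | h
  · have h' : e n = 1 := by have := he n; omega
    exact ⟨htail ▸ one_div_le_expVal_of_head_eq_one hq (fun i => he _) (by simpa using h'),
      expVal_le_of_head_eq_zero hq (fun i => hd _) (by simpa using h)⟩
  · have h' : e n = 0 := by have := he n; omega
    exact ⟨one_div_le_expVal_of_head_eq_one hq (fun i => hd _) (by simpa using h),
      htail ▸ expVal_le_of_head_eq_zero hq (fun i => he _) (by simpa using h')⟩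

lemma prep_le_one {s : ℕ} (hs : s ≤ 1) (hd : ∀ i, d i ≤ 1) (k i : ℕ) : prep s k d i ≤ 1 := by
  unfold prep
  split
  exacts [hs, hd _]

lemma prep_zero (s : ℕ) (d : ℕ → ℕ) : prep s 0 d = d := by
  funext i
  simp [prep]

lemma expVal_prep_succ (hq : 1 < q) {s : ℕ} (hs : s ≤ 1) (hd : ∀ i, d i ≤ 1) (k : ℕ) :
    expVal q (prep s (k + 1) d) = (s + expVal q (prep s k d)) / q := by
  have htail : (fun i => prep s (k + 1) d (i + 1)) = prep s k d := by
    funext i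
    simp only [prep, Nat.add_lt_add_iff_right, Nat.add_sub_add_right]
  rw [expVal_eq_head_add_tail hq (prep_le_one hs hd _), htail]
  simp [prep]

lemma exists_expansion_apply_eq (hq : 1 < q) (hq2 : q ≤ 2) (hd : ∀ i, d i ≤ 1) {n : ℕ}
    (hS : expVal q (fun i => d (i + n)) ∈ switchRegion q) {s : ℕ} (hs : s ≤ 1) :
    ∃ e ∈ expansions q (expVal q d), e n = s := by
  set v := expVal q (fun i => d (i + n))
  have hy : q * v - s ∈ Icc 0 (1 / (q - 1)) := by
    obtain ⟨hv1, hv2⟩ := hS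
    have h1 : 1 ≤ q * v := by rwa [div_le_iff₀' (by linarith)] at hv1
    have h2 : q * v ≤ 1 / (q - 1) := by
      calc q * v ≤ q * (1 / (q ^ 2 - q)) := by gcongr
        _ = 1 / (q - 1) := by
          rw [show q ^ 2 - q = q * (q - 1) by ring]
          field_simp
    have : (s : ℝ) ≤ 1 := by exact_mod_cast hs
    constructor <;> linarith [(s.cast_nonneg : (0 : ℝ) ≤ s)]
  set t := prep s 1 (greedyExpansion q (q * v - s))
  have ht : ∀ i, t i ≤ 1 := prep_le_one hs (greedyExpansion_le_one _ _) 1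
  have htv : expVal q t = v := by
    rw [expVal_prep_succ hq hs (greedyExpansion_le_one _ _) 0, prep_zero,
      expVal_greedyExpansion hq hq2 hy]
    field_simp
    ring
  have he : ∀ i, (if i < n then d i else t (i - n)) ≤ 1 := fun i => by
    split
    exacts [hd i, ht _]
  refine ⟨fun i => if i < n then d i else t (i - n), ⟨he, ?_⟩, by simp [t, prep]⟩
  exact (expVal_eq_iff_expVal_tail_eq hq he hd fun i hi => if_pos hi).mpr (by simpa using htv)

def AvoidsSwitchRegion (q : ℝ) (d : ℕ → ℕ) : Prop :=
  ∀ n, expVal q (fun i => d (i + n)) ∉ switchRegion q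

lemma expansions_expVal_eq_singleton_iff (hq : 1 < q) (hq2 : q ≤ 2) (hd : ∀ i, d i ≤ 1) :
    expansions q (expVal q d) = {d} ↔ AvoidsSwitchRegion q d := by
  constructor
  · intro h n hS
    obtain ⟨e₀, he₀, he₀n⟩ := exists_expansion_apply_eq hq hq2 hd hS zero_le_one
    obtain ⟨e₁, he₁, he₁n⟩ := exists_expansion_apply_eq hq hq2 hd hS le_rfl
    rw [h] at he₀ he₁
    rw [he₀, ← he₁, he₁n] at he₀n
    exact one_ne_zero he₀n
  · refine fun h => eq_singleton_iff_unique_mem.mpr ⟨⟨hd, rfl⟩, fun e he => ?_⟩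
    by_contra hne
    obtain ⟨n, hn⟩ := exists_tail_mem_switchRegion hq hd he.1 he.2.symm (Ne.symm hne)
    exact h n hn

lemma Uset_one_eq_image (hq : 1 < q) (hq2 : q ≤ 2) :
    Uset q 1 = expVal q '' {d | (∀ i, d i ≤ 1) ∧ AvoidsSwitchRegion q d} := by
  ext x
  simp only [Uset, mem_ofPred_eq, mem_image, Nat.cast_one, Cardinal.mk_set_eq_one_iff]
  constructor
  · rintro ⟨-, d, hx⟩
    obtain ⟨hd, rfl⟩ : d ∈ expansions q x := hx ▸ mem_singleton d
    exact ⟨d, ⟨hd, (expansions_expVal_eq_singleton_iff hq hq2 hd).mp hx⟩, rfl⟩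
  · rintro ⟨d, ⟨hd, havoid⟩, rfl⟩
    exact ⟨expVal_mem_Icc hq hd, d, (expansions_expVal_eq_singleton_iff hq hq2 hd).mpr havoid⟩

namespace AvoidsSwitchRegion

lemma expVal_tail_lt_of_apply_eq_zero (h : AvoidsSwitchRegion q d) (hq : 1 < q)
    (hd : ∀ i, d i ≤ 1) {n : ℕ} (hn : d n = 0) : expVal q (fun i => d (i + n)) < 1 / q :=
  lt_of_not_ge fun h1 =>
    h n ⟨h1, expVal_le_of_head_eq_zero hq (fun i => hd _) (by simpa using hn)⟩

lemma lt_expVal_tail_of_apply_eq_one (h : AvoidsSwitchRegion q d) (hq : 1 < q)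
    (hd : ∀ i, d i ≤ 1) {n : ℕ} (hn : d n = 1) : 1 / (q ^ 2 - q) < expVal q (fun i => d (i + n)) :=
  lt_of_not_ge fun h1 =>
    h n ⟨one_div_le_expVal_of_head_eq_one hq (fun i => hd _) (by simpa using hn), h1⟩

/-- Reflection `x ↦ 1/(q-1) - x` maps the switch region onto itself. -/
lemma reflSeq (h : AvoidsSwitchRegion q d) (hq : 1 < q) (hd : ∀ i, d i ≤ 1) :
    AvoidsSwitchRegion q (reflSeq d) := by
  intro n ⟨h1, h2⟩
  have hM := one_div_sub_one_eq_add hq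
  rw [show (fun i => _root_.reflSeq d (i + n)) = _root_.reflSeq (fun i => d (i + n)) from rfl,
    expVal_reflSeq hq fun i => hd _] at h1 h2
  exact h n ⟨by linarith, by linarith⟩

/-- The tail starting at the `0` has value `< 1/q` and the one starting at the last `1` has value
`> 1/(q²-q)`; together they force `1/(q²-q) < q - 1`, i.e. `q(q-1)² > 1`. -/
lemma not_pattern_011 (h : AvoidsSwitchRegion q d) (hq : 1 < q)
    (hk : q ^ 3 - 2 * q ^ 2 + q - 1 ≤ 0) (hd : ∀ i, d i ≤ 1) {j : ℕ}
    (h0 : d j = 0) (h1 : d (j + 1) = 1) (h2 : d (j + 2) = 1) : False := by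
  have hv0 := h.expVal_tail_lt_of_apply_eq_zero hq hd h0
  have hv2 := h.lt_expVal_tail_of_apply_eq_one hq hd h2
  rw [expVal_tail_eq hq hd, h0, Nat.cast_zero, zero_add, div_lt_div_iff_of_pos_right (by linarith),
    expVal_tail_eq hq hd, h1, Nat.cast_one, div_lt_one (by linarith)] at hv0
  have hlt : 1 / (q ^ 2 - q) < q - 1 := by
    refine hv2.trans ?_
    linarith
  rw [div_lt_iff₀ (by nlinarith)] at hlt
  nlinarith

lemma apply_succ_ne_of_apply_ne (h : AvoidsSwitchRegion q d) (hq : 1 < q)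
    (hk : q ^ 3 - 2 * q ^ 2 + q - 1 ≤ 0) (hd : ∀ i, d i ≤ 1) {j : ℕ} (hj : d j ≠ d (j + 1)) :
    d (j + 1) ≠ d (j + 2) := by
  intro heq
  have hj' := hd j
  rcases Nat.le_one_iff_eq_zero_or_eq_one.mp (hd (j + 1)) with h1 | h1
  · exact (h.reflSeq hq hd).not_pattern_011 hq hk (fun i => Nat.sub_le 1 (d i))
      (j := j) (by simp only [_root_.reflSeq]; omega) (by simp only [_root_.reflSeq]; omega)
      (by simp only [_root_.reflSeq]; omega)
  · exact h.not_pattern_011 hq hk hd (j := j) (by omega) h1 (by omega)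

end AvoidsSwitchRegion

lemma eq_const_or_eq_prep_of_apply_succ_ne (hd : ∀ i, d i ≤ 1)
    (h : ∀ j, d j ≠ d (j + 1) → d (j + 1) ≠ d (j + 2)) :
    d = (fun _ => 0) ∨ d = (fun _ => 1) ∨
      (∃ k, d = prep 0 k (eps 0)) ∨ ∃ k, d = prep 1 k (fun i => i % 2) := by
  by_cases hconst : ∀ j, d (j + 1) = d j
  · have : ∀ i, d i = d 0 := fun i => by
      induction i with
      | zero => rfl
      | succ i ih => rw [hconst i, ih]
    rcases Nat.le_one_iff_eq_zero_or_eq_one.mp (hd 0) with h0 | h0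
    · exact Or.inl (funext fun i => (this i).trans h0)
    · exact Or.inr (Or.inl (funext fun i => (this i).trans h0))
  have hex : ∃ j, d (j + 1) ≠ d j := not_forall.mp hconst
  obtain ⟨k, hk, hmin⟩ : ∃ k, d (k + 1) ≠ d k ∧ ∀ j < k, d (j + 1) = d j :=
    ⟨Nat.find hex, Nat.find_spec hex, fun j hj => not_not.mp (Nat.find_min hex hj)⟩
  have halt : ∀ m, d (k + m + 1) ≠ d (k + m) := fun m => by
    induction m with
    | zero => exact hk
    | succ m ih => exact (h (k + m) ih.symm).symm
  have hform : ∀ i, d i = if i ≤ k then d 0 else (d 0 + i - k) % 2 := fun i => by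
    induction i with
    | zero => simp
    | succ i ih =>
      have := hd i
      have := hd (i + 1)
      by_cases hi : i < k
      · rw [hmin i hi, ih, if_pos hi.le, if_pos (Nat.succ_le_of_lt hi)]
      · have := halt (i - k)
        rw [show k + (i - k) = i by omega] at this
        split_ifs at ih ⊢ <;> omega
  rcases Nat.le_one_iff_eq_zero_or_eq_one.mp (hd 0) with h0 | h0
  · refine Or.inr (Or.inr (Or.inl ⟨k + 1, funext fun i => ?_⟩))
    rw [hform i, h0]
    simp only [prep, eps]
    split_ifs <;> omega
  · refine Or.inr (Or.inr (Or.inr ⟨k + 1, funext fun i => ?_⟩))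
    rw [hform i, h0]
    simp only [prep]
    split_ifs <;> omega

lemma eps_zero_apply (i : ℕ) : eps 0 i = (i + 1) % 2 := by
  simp [eps]

lemma eps_zero_le_one (i : ℕ) : eps 0 i ≤ 1 := by
  rw [eps_zero_apply]
  omega

lemma exists_tail_prep_zero_eps_zero (k n : ℕ) :
    ∃ m, (fun i => prep 0 k (eps 0) (i + n)) = prep 0 m (eps 0) :=
  ⟨if n ≤ k then k - n else (n - k) % 2, funext fun i => by
    simp only [prep, eps]
    split_ifs <;> omega⟩

lemma expVal_eps_zero (hq : 1 < q) : expVal q (eps 0) = q / (q ^ 2 - 1) := by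
  have h0 := expVal_tail_eq hq eps_zero_le_one 0
  have h1 := expVal_tail_eq hq eps_zero_le_one 1
  have hper : (fun i => eps 0 (i + 2)) = eps 0 := funext fun i => by
    simp only [eps_zero_apply]
    omega
  simp only [add_zero, zero_add, hper, show eps 0 0 = 1 from rfl, show eps 0 1 = 0 from rfl]
    at h0 h1
  rw [h1] at h0
  rw [eq_div_iff (by nlinarith)]
  field_simp at h0
  push_cast at h0
  linarith

lemma expVal_prep_zero_eps_zero (hq : 1 < q) (m : ℕ) :
    expVal q (prep 0 m (eps 0)) = q / (q ^ 2 - 1) / q ^ m := by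
  induction m with
  | zero => rw [prep_zero, expVal_eps_zero hq, pow_zero, div_one]
  | succ m ih =>
    rw [expVal_prep_succ hq zero_le_one eps_zero_le_one, ih, pow_succ]
    ring

lemma avoidsSwitchRegion_prep_zero_eps_zero (hq : 1 < q) (hg : q + 1 < q ^ 2) (k : ℕ) :
    AvoidsSwitchRegion q (prep 0 k (eps 0)) := by
  intro n
  obtain ⟨m, hm⟩ := exists_tail_prep_zero_eps_zero k n
  rw [hm, expVal_prep_zero_eps_zero hq]
  have hq21 : 0 < q ^ 2 - 1 := by nlinarith
  rcases m with _ | m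
  · refine fun h => absurd h.2 (not_le.mpr ?_)
    rw [pow_zero, div_one, div_lt_div_iff₀ (by nlinarith) hq21]
    nlinarith
  · refine fun h => absurd h.1 (not_le.mpr ?_)
    calc q / (q ^ 2 - 1) / q ^ (m + 1) ≤ q / (q ^ 2 - 1) / q := by
          gcongr
          exact le_self_pow₀ hq.le m.succ_ne_zero
      _ < 1 / q := by
          rw [div_div, div_lt_div_iff₀ (by positivity) (by linarith)]
          nlinarith

lemma avoidsSwitchRegion_const_zero (hq : 1 < q) : AvoidsSwitchRegion q (fun _ => 0) :=
  fun _ h => absurd h.1 (not_le.mpr (by rw [expVal_const_zero]; positivity))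

lemma reflSeq_prep_zero_eps_zero (k : ℕ) :
    reflSeq (prep 0 k (eps 0)) = prep 1 k (fun i => i % 2) := funext fun i => by
  simp only [reflSeq, prep, eps]
  split_ifs <;> omega

lemma setOf_avoidsSwitchRegion_eq (hq : 1 < q) (hg : q + 1 < q ^ 2)
    (hk : q ^ 3 - 2 * q ^ 2 + q - 1 ≤ 0) :
    {d | (∀ i, d i ≤ 1) ∧ AvoidsSwitchRegion q d} =
      {fun _ => 0, fun _ => 1} ∪ ⋃ k, {prep 0 k (eps 0), prep 1 k (fun i => i % 2)} := by
  ext d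
  simp only [mem_ofPred_eq, mem_union, mem_insert_iff, mem_singleton_iff, mem_iUnion]
  constructor
  · rintro ⟨hd, h⟩
    rcases eq_const_or_eq_prep_of_apply_succ_ne hd fun j => h.apply_succ_ne_of_apply_ne hq hk hd
      with h | h | ⟨k, h⟩ | ⟨k, h⟩
    exacts [Or.inl (Or.inl h), Or.inl (Or.inr h), Or.inr ⟨k, Or.inl h⟩, Or.inr ⟨k, Or.inr h⟩]
  · have hP := avoidsSwitchRegion_prep_zero_eps_zero hq hg
    have hP_le := prep_le_one zero_le_one eps_zero_le_one
    rintro ((rfl | rfl) | ⟨k, rfl | rfl⟩)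
    · exact ⟨fun _ => zero_le_one, avoidsSwitchRegion_const_zero hq⟩
    · exact ⟨fun _ => le_rfl, (avoidsSwitchRegion_const_zero hq).reflSeq hq fun _ => zero_le_one⟩
    · exact ⟨hP_le k, hP k⟩
    · rw [← reflSeq_prep_zero_eps_zero]
      exact ⟨fun i => Nat.sub_le 1 _, (hP k).reflSeq hq (hP_le k)⟩

end

/-- `U₁ = {(0^∞)_{q₂}, (1^∞)_{q₂}} ∪ ⋃_{k≥0} {(0^k(10)^∞)_{q₂}, (1^k(01)^∞)_{q₂}}`. -/
theorem stmt6 (q2 : ℝ) (hq2 : q2 ∈ Set.Ioo (1 : ℝ) 2)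
    (hq2r : q2 ^ 4 = 2 * q2 ^ 2 + q2 + 1) :
    Uset q2 1 =
      {expVal q2 (fun _ => 0), expVal q2 (fun _ => 1)} ∪
        ⋃ k : ℕ, {expVal q2 (prep 0 k (eps 0)), expVal q2 (prep 1 k (fun i => i % 2))} := by
  obtain ⟨hq1, hq2⟩ := hq2
  have hgolden : q2 + 1 < q2 ^ 2 := by
    nlinarith [sq_nonneg (q2 ^ 2 - q2 - 1), sq_nonneg (q2 ^ 2 + q2 + 1)]
  have hk : q2 ^ 3 - 2 * q2 ^ 2 + q2 - 1 ≤ 0 := by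
    nlinarith [mul_pos (sub_pos.mpr hq1) (sub_pos.mpr hq1)]
  rw [Uset_one_eq_image hq1 hq2.le, setOf_avoidsSwitchRegion_eq hq1 hgolden hk, image_union,
    image_pair, image_iUnion]
  simp only [image_pair]
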